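/- For every integer n ≥ 0, 24·∑_{k=0}^{n-1} k(k+1)(8k+9)·T_k·T_{k+1} = −(n+1)²(2n−3)²·T_{n+1}² + 6(n+1)(4n³−5n+3)·T_n·T_{n+1} − 9(n+1)²(2n−1)²·T_n². -/

import Mathlib

open Finset

/-- The integer value of C(2k,k)/(2k-1): equals -1 at k = 0 and 2*Catalan(k-1) for k >= 1. -/
def c (k : ℕ) : ℤ := if k = 0 then -1 else 2 * (catalan (k - 1) : ℤ)

/-- W n = ∑_{k=0}^{⌊n/2⌋} C(n,2k) * C(2k,k)/(2k-1). -/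
def W (n : ℕ) : ℤ := ∑ k ∈ Finset.range (n / 2 + 1), (n.choose (2 * k) : ℤ) * c k

/-- The n-th central trinomial coefficient T n = ∑_{l=0}^{⌊n/2⌋} C(n,2l) * C(2l,l). -/
def T (n : ℕ) : ℤ := ∑ l ∈ Finset.range (n / 2 + 1), (n.choose (2 * l) : ℤ) * ((2 * l).choose l : ℤ)

instance fact_prime_3 : Fact (Nat.Prime 3) := ⟨by norm_num⟩

open scoped Nat

private lemma cast_choose'' (a b cc : ℕ) (h : a = b + cc) :
    ((a.choose b : ℚ)) = (a ! : ℚ) / (b ! * cc !) := by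
  subst h
  rw [Nat.cast_choose ℚ (Nat.le_add_right b cc), Nat.add_sub_cancel_left]

private lemma hdouble (m : ℕ) : (2*m+2).choose (m+1) = 2 * ((2*m+1).choose m) := by
  have h1 : (2*m+1+1).choose (m+1) = (2*m+1).choose m + (2*m+1).choose (m+1) :=
    Nat.choose_succ_succ _ _
  have h2 : (2*m+1).choose (m+1) = (2*m+1).choose m := by
    have := Nat.choose_symm (show m ≤ 2*m+1 by omega)
    rw [show 2*m+1-m = m+1 by omega] at this
    omega
  have h3 : 2*m+2 = 2*m+1+1 := rfl
  rw [h3, h1, h2]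
  ring

private lemma pointS (n m : ℕ) :
    ((n:ℤ)+2) * ((n+2).choose (2*m+2) : ℤ) * (((2*m+2).choose (m+1) : ℤ))
      - (2*(n:ℤ)+3) * ((n+1).choose (2*m+2) : ℤ) * (((2*m+2).choose (m+1) : ℤ))
      - 3*((n:ℤ)+1) * (n.choose (2*m+2) : ℤ) * (((2*m+2).choose (m+1) : ℤ))
    = (-4) * ((m:ℤ)+2) * ((n+1).choose (2*m+3) : ℤ) * (((2*m+3).choose (m+1) : ℤ))
      - (-4) * ((m:ℤ)+1) * ((n+1).choose (2*m+1) : ℤ) * (((2*m+1).choose m : ℤ)) := by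
  rcases Nat.lt_or_ge n (2*m+2) with h | h
  · rcases (by omega : n < 2*m ∨ n = 2*m ∨ n = 2*m+1) with h' | rfl | rfl
    · have z1 : (n+2).choose (2*m+2) = 0 := Nat.choose_eq_zero_of_lt (by omega)
      have z2 : (n+1).choose (2*m+2) = 0 := Nat.choose_eq_zero_of_lt (by omega)
      have z3 : n.choose (2*m+2) = 0 := Nat.choose_eq_zero_of_lt (by omega)
      have z4 : (n+1).choose (2*m+3) = 0 := Nat.choose_eq_zero_of_lt (by omega)
      have z5 : (n+1).choose (2*m+1) = 0 := Nat.choose_eq_zero_of_lt (by omega)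
      rw [z1, z2, z3, z4, z5]
      push_cast
      ring
    · -- n = 2*m
      have z2 : (2*m+1).choose (2*m+2) = 0 := Nat.choose_eq_zero_of_lt (by omega)
      have z3 : (2*m).choose (2*m+2) = 0 := Nat.choose_eq_zero_of_lt (by omega)
      have z4 : (2*m+1).choose (2*m+3) = 0 := Nat.choose_eq_zero_of_lt (by omega)
      have e1 : (2*m+2).choose (2*m+2) = 1 := Nat.choose_self _
      have e5 : (2*m+1).choose (2*m+1) = 1 := Nat.choose_self _
      rw [z2, z3, z4, e1, e5, hdouble]
      push_cast
      ring
    · -- n = 2*m+1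
      have z2 : (2*m+1).choose (2*m+2) = 0 := Nat.choose_eq_zero_of_lt (by omega)
      have z4 : (2*m+2).choose (2*m+3) = 0 := Nat.choose_eq_zero_of_lt (by omega)
      have e1 : (2*m+3).choose (2*m+2) = 2*m+3 := by
        have : (2*m+2+1).choose (2*m+2) = 2*m+2+1 := Nat.choose_succ_self_right _
        simpa using this
      have e2 : (2*m+2).choose (2*m+2) = 1 := Nat.choose_self _
      have e5 : (2*m+2).choose (2*m+1) = 2*m+2 := by
        have : (2*m+1+1).choose (2*m+1) = 2*m+1+1 := Nat.choose_succ_self_right _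
        simpa using this
      rw [z2, z4, e1, e2, e5, hdouble]
      push_cast
      ring
  · obtain ⟨j, rfl⟩ := Nat.exists_eq_add_of_le h
    qify
    rw [cast_choose'' (2*m+2+j+2) (2*m+2) (j+2) (by omega),
        cast_choose'' (2*m+2+j+1) (2*m+2) (j+1) (by omega),
        cast_choose'' (2*m+2+j) (2*m+2) j (by omega),
        cast_choose'' (2*m+2+j+1) (2*m+3) j (by omega),
        cast_choose'' (2*m+2+j+1) (2*m+1) (j+2) (by omega),
        cast_choose'' (2*m+2) (m+1) (m+1) (by omega),
        cast_choose'' (2*m+3) (m+1) (m+2) (by omega),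
        cast_choose'' (2*m+1) m (m+1) (by omega)]
    have f1 : ((2*m+2+j+2)! : ℚ) = (2*(m:ℚ)+(j:ℚ)+4)*(2*(m:ℚ)+(j:ℚ)+3)*((2*m+2+j)! : ℚ) := by
      rw [show 2*m+2+j+2 = (2*m+2+j) + 1 + 1 by omega, Nat.factorial_succ, Nat.factorial_succ]
      push_cast
      ring
    have f2 : ((2*m+2+j+1)! : ℚ) = (2*(m:ℚ)+(j:ℚ)+3)*((2*m+2+j)! : ℚ) := by
      rw [show 2*m+2+j+1 = (2*m+2+j) + 1 by omega, Nat.factorial_succ]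
      push_cast
      ring
    have f3 : ((2*m+2)! : ℚ) = (2*(m:ℚ)+2)*((2*m+1)! : ℚ) := by
      rw [show 2*m+2 = (2*m+1) + 1 by omega, Nat.factorial_succ]
      push_cast
      ring
    have f4 : ((2*m+3)! : ℚ) = (2*(m:ℚ)+3)*(2*(m:ℚ)+2)*((2*m+1)! : ℚ) := by
      rw [show 2*m+3 = (2*m+1) + 1 + 1 by omega, Nat.factorial_succ, Nat.factorial_succ]
      push_cast
      ring
    have f5 : ((m+1)! : ℚ) = ((m:ℚ)+1)*(m ! : ℚ) := by
      rw [Nat.factorial_succ]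
      push_cast
      ring
    have f6 : ((m+2)! : ℚ) = ((m:ℚ)+2)*((m:ℚ)+1)*(m ! : ℚ) := by
      rw [show m+2 = m + 1 + 1 by omega, Nat.factorial_succ, Nat.factorial_succ]
      push_cast
      ring
    have f7 : ((j+1)! : ℚ) = ((j:ℚ)+1)*(j ! : ℚ) := by
      rw [Nat.factorial_succ]
      push_cast
      ring
    have f8 : ((j+2)! : ℚ) = ((j:ℚ)+2)*((j:ℚ)+1)*(j ! : ℚ) := by
      rw [show j+2 = j + 1 + 1 by omega, Nat.factorial_succ, Nat.factorial_succ]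
      push_cast
      ring
    rw [f1, f2, f3, f4, f5, f6, f7, f8]
    have hw : ((2*m+2+j)! : ℚ) ≠ 0 := by positivity
    have hz : ((2*m+1)! : ℚ) ≠ 0 := by positivity
    have hx : ((m)! : ℚ) ≠ 0 := by positivity
    have hy : ((j)! : ℚ) ≠ 0 := by positivity
    have n1 : (2*(m:ℚ)+2) ≠ 0 := by positivity
    have n2 : (2*(m:ℚ)+3) ≠ 0 := by positivity
    have n3 : ((m:ℚ)+1) ≠ 0 := by positivity
    have n4 : ((m:ℚ)+2) ≠ 0 := by positivity
    have n5 : ((j:ℚ)+1) ≠ 0 := by positivity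
    have n6 : ((j:ℚ)+2) ≠ 0 := by positivity
    field_simp
    push_cast
    ring

/-- The telescoping certificate. -/
def g (n : ℕ) : ℕ → ℤ
  | 0 => 0
  | (m+1) => (-4) * ((m:ℤ)+1) * ((n+1).choose (2*m+1) : ℤ) * (((2*m+1).choose m : ℤ))

private lemma T_ext (m M : ℕ) (h : m/2+1 ≤ M) :
    T m = ∑ l ∈ Finset.range M, (m.choose (2*l) : ℤ) * ((2*l).choose l : ℤ) := by
  rw [T]
  apply Finset.sum_subset (Finset.range_subset_range.mpr h)
  intro x _ hnx
  simp only [Finset.mem_range] at hnx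
  have hlt : m < 2*x := by omega
  rw [Nat.choose_eq_zero_of_lt hlt]
  simp

private lemma Trec (n : ℕ) :
    ((n:ℤ)+2) * T (n+2) = (2*(n:ℤ)+3) * T (n+1) + 3*((n:ℤ)+1) * T n := by
  have hpt : ∀ l ∈ Finset.range (n+3),
      ((n:ℤ)+2) * (((n+2).choose (2*l) : ℤ) * ((2*l).choose l : ℤ))
        - (2*(n:ℤ)+3) * (((n+1).choose (2*l) : ℤ) * ((2*l).choose l : ℤ))
        - 3*((n:ℤ)+1) * ((n.choose (2*l) : ℤ) * ((2*l).choose l : ℤ))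
      = g n (l+1) - g n l := by
    intro l _
    match l with
    | 0 =>
      show _ = g n 1 - g n 0
      simp only [g]
      norm_num [Nat.choose_one_right]
      push_cast
      ring
    | (m+1) =>
      have h1 : 2*(m+1) = 2*m+2 := by ring
      have h2 : 2*(m+1)+1 = 2*m+3 := by ring
      simp only [g, h1, h2]
      have := pointS n m
      push_cast
      push_cast at this
      linear_combination this
  have key : ∑ l ∈ Finset.range (n+3),
      (((n:ℤ)+2) * (((n+2).choose (2*l) : ℤ) * ((2*l).choose l : ℤ))
        - (2*(n:ℤ)+3) * (((n+1).choose (2*l) : ℤ) * ((2*l).choose l : ℤ))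
        - 3*((n:ℤ)+1) * ((n.choose (2*l) : ℤ) * ((2*l).choose l : ℤ))) = 0 := by
    rw [Finset.sum_congr rfl hpt, Finset.sum_range_sub (g n) (n+3)]
    have hz : (n+1).choose (2*(n+2)+1) = 0 := Nat.choose_eq_zero_of_lt (by omega)
    simp [g, hz]
  have expand : ((n:ℤ)+2) * T (n+2) - (2*(n:ℤ)+3) * T (n+1) - 3*((n:ℤ)+1) * T n
      = ∑ l ∈ Finset.range (n+3),
      (((n:ℤ)+2) * (((n+2).choose (2*l) : ℤ) * ((2*l).choose l : ℤ))
        - (2*(n:ℤ)+3) * (((n+1).choose (2*l) : ℤ) * ((2*l).choose l : ℤ))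
        - 3*((n:ℤ)+1) * ((n.choose (2*l) : ℤ) * ((2*l).choose l : ℤ))) := by
    rw [T_ext (n+2) (n+3) (by omega), T_ext (n+1) (n+3) (by omega), T_ext n (n+3) (by omega),
        Finset.mul_sum, Finset.mul_sum, Finset.mul_sum,
        ← Finset.sum_sub_distrib, ← Finset.sum_sub_distrib]
  linarith [key, expand]

theorem stmt_13 (n : ℕ) :
    24 * (∑ k ∈ Finset.range n, (k : ℤ) * ((k : ℤ) + 1) * (8 * (k : ℤ) + 9) * T k * T (k + 1)) =
      -((n : ℤ) + 1) ^ 2 * (2 * (n : ℤ) - 3) ^ 2 * (T (n + 1)) ^ 2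
        + 6 * ((n : ℤ) + 1) * (4 * (n : ℤ) ^ 3 - 5 * (n : ℤ) + 3) * T n * T (n + 1)
        - 9 * ((n : ℤ) + 1) ^ 2 * (2 * (n : ℤ) - 1) ^ 2 * (T n) ^ 2 := by
  induction n with
  | zero =>
    have hT0 : T 0 = 1 := by simp [T]
    have hT1 : T 1 = 1 := by simp [T]
    simp [hT0, hT1]
  | succ n ih =>
    rw [Finset.sum_range_succ, (rfl : n+1+1 = n+2)]
    push_cast
    linear_combination ih -
      ((-(((n:ℤ))+2)*(2*(n:ℤ)-1)^2) * T (n+2)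
        + (16*(n:ℤ)^3+68*(n:ℤ)^2+52*(n:ℤ)+9) * T (n+1)
        + (-3*((n:ℤ)+1)*(2*(n:ℤ)-1)^2) * T n) * Trec n
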